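/- Under the lossy source coding construction (Xⁿ i.i.d. Bern(θ), Vⁿ i.i.d. uniform independent of Xⁿ, Uⁿ = φ₁(Xⁿ,Vⁿ) ⊕ Vⁿ, X̂ⁿ = φ₂(pad₂(H₁Vⁿ, QUⁿ))), the normalized expected Hamming distortion satisfies (1/n)·E[d_H(Xⁿ, X̂ⁿ)] ≤ D + δ + ε. -/

import Mathlib

/-- The Bernoulli pmf on `F₂`: `bern r x = r^x (1−r)^{1−x}`. -/
noncomputable def bern (r : ℝ) (x : ZMod 2) : ℝ :=
  r ^ x.val * (1 - r) ^ (1 - x.val)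

/-- The target source–reconstruction joint pmf
`p(x,x̂) = α^{x̂}(1−α)^{1−x̂} D^{x⊕x̂}(1−D)^{1−x⊕x̂}` on `F₂²`. -/
noncomputable def targetP (α D : ℝ) (x xh : ZMod 2) : ℝ :=
  bern α xh * bern D (x + xh)

/-- `pad₂ w m` is the vector of `F₂ⁿ` whose first `k₂` entries are `0`,
followed by `w ∈ F₂^{n−k₁}` and then `m ∈ F₂^{k₁−k₂}`.  Coordinates are
indexed by `Fin a ⊕ Fin b ⊕ Fin c` with `a = k₂`, `b = n−k₁`, `c = k₁−k₂`. -/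
def pad₂ {a b c : ℕ} (w : Fin b → ZMod 2) (m : Fin c → ZMod 2) :
    (Fin a ⊕ Fin b ⊕ Fin c) → ZMod 2 :=
  Sum.elim (fun _ => 0) (Sum.elim w m)

/-!
Transport the distortion from the scheme's law to the target law `2⁻ⁿ ∏ p(xᵢ, uᵢ + vᵢ)`:
since `0 ≤ d_H ≤ n`, this costs at most `n` times the total variation distance `δ`. Under the target
law the shift `w = u + v` is i.i.d. `p`-distributed with `x`, the reconstruction is exact except
on the decoder's failure event (probability `≤ ε`, costing `≤ n`), and the exact reconstruction
has expected Hamming distortion `n · P(x ≠ x̂) = n D`. The syndrome `H₁ v` the decoder receives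
equals `H₁ u` because `φ₁` takes values in `C₁ = ker H₁`.
-/

open Finset

lemma sum_sum_sum_ite_eq_mul {U X V : Type*} [Fintype U] [Fintype X] [Fintype V] [DecidableEq U]
    (φ : X → V → U) (P : X → V → ℝ) (F : U → X → V → ℝ) :
    ∑ u, ∑ x, ∑ v, (if φ x v = u then P x v else 0) * F u x v = ∑ x, ∑ v, P x v * F (φ x v) x v := by
  rw [sum_comm]
  refine sum_congr rfl fun x _ => ?_
  rw [sum_comm]
  simp only [ite_mul, zero_mul, sum_ite_eq, mem_univ, if_true]

lemma sum_mul_le_sum_mul_add_mul_tv {Ω : Type*} [Fintype Ω] {q r f : Ω → ℝ} {M : ℝ}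
    (hf : ∀ ω, f ω ∈ Set.Icc 0 M) (hqr : ∑ ω, q ω = ∑ ω, r ω) :
    ∑ ω, q ω * f ω ≤ ∑ ω, r ω * f ω + M * ((1 / 2) * ∑ ω, |q ω - r ω|) := by
  have centered : ∑ ω, q ω * f ω - ∑ ω, r ω * f ω = ∑ ω, (q ω - r ω) * (f ω - M / 2) := by
    simp only [sub_mul, mul_sub, sum_sub_distrib, ← sum_mul, hqr]
    ring
  have pointwise : ∀ ω, (q ω - r ω) * (f ω - M / 2) ≤ M / 2 * |q ω - r ω| := fun ω => by
    obtain ⟨h₀, h₁⟩ := hf ω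
    calc (q ω - r ω) * (f ω - M / 2) ≤ |q ω - r ω| * |f ω - M / 2| :=
          (le_abs_self _).trans (abs_mul _ _).le
      _ ≤ |q ω - r ω| * (M / 2) :=
          mul_le_mul_of_nonneg_left (abs_le.2 ⟨by linarith, by linarith⟩) (abs_nonneg _)
      _ = M / 2 * |q ω - r ω| := mul_comm _ _
  have := sum_le_sum fun ω (_ : ω ∈ univ) => pointwise ω
  rw [← mul_sum] at this
  linarith

section ProductMeasure

variable {ι : Type*} [Fintype ι] [DecidableEq ι]

lemma sum_pi_sum_pi_eq_sum_pi_prod {A B : Type*} [Fintype A] [Fintype B]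
    (F : (ι → A) → (ι → B) → ℝ) :
    ∑ x : ι → A, ∑ y : ι → B, F x y = ∑ z : ι → A × B, F (fun i => (z i).1) (fun i => (z i).2) := by
  rw [← Fintype.sum_prod_type']
  exact (Fintype.sum_equiv (Equiv.arrowProdEquivProdArrow _ _ _) _ _ fun _ => rfl).symm

lemma sum_pi_prod_eq_pow {A : Type*} [Fintype A] (F : A → ℝ) :
    ∑ x : ι → A, ∏ i, F (x i) = (∑ s, F s) ^ Fintype.card ι := by
  rw [← card_univ, ← prod_const, Fintype.prod_sum]

lemma sum_pi_sum_pi_prod_eq_pow {A B : Type*} [Fintype A] [Fintype B] (F : A → B → ℝ) :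
    ∑ x : ι → A, ∑ y : ι → B, ∏ i, F (x i) (y i) = (∑ s, ∑ t, F s t) ^ Fintype.card ι := by
  rw [sum_pi_sum_pi_eq_sum_pi_prod, ← Fintype.sum_prod_type', ← sum_pi_prod_eq_pow]

lemma sum_pi_prod_mul_sum {C : Type*} [Fintype C] (q h : C → ℝ) (hq : ∑ c, q c = 1) :
    ∑ z : ι → C, (∏ i, q (z i)) * ∑ i, h (z i) = Fintype.card ι * ∑ c, q c * h c := by
  have single : ∀ i₀, ∑ z : ι → C, (∏ i, q (z i)) * h (z i₀) = ∑ c, q c * h c := fun i₀ => by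
    calc ∑ z : ι → C, (∏ i, q (z i)) * h (z i₀)
        = ∑ z : ι → C, ∏ i, q (z i) * (if i = i₀ then h (z i) else 1) := by
          simp only [prod_mul_distrib, prod_ite_eq', mem_univ, if_true]
      _ = ∏ i, ∑ c, q c * (if i = i₀ then h c else 1) :=
          (Fintype.prod_sum fun i c => q c * if i = i₀ then h c else 1).symm
      _ = ∑ c, q c * h c := by
          rw [Fintype.prod_eq_single i₀ fun i hi => by simp [hi, hq]]
          simp
  calc ∑ z : ι → C, (∏ i, q (z i)) * ∑ i, h (z i)
      = ∑ i₀, ∑ z : ι → C, (∏ i, q (z i)) * h (z i₀) := by simp only [mul_sum]; exact sum_comm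
    _ = Fintype.card ι * ∑ c, q c * h c := by
        rw [sum_congr rfl fun i₀ _ => single i₀, sum_const, card_univ, nsmul_eq_mul]

lemma sum_pi_sum_pi_prod_mul_hammingDist {A : Type*} [Fintype A] [DecidableEq A]
    (p : A → A → ℝ) (hp : ∑ s, ∑ t, p s t = 1) :
    ∑ x : ι → A, ∑ w : ι → A, (∏ i, p (x i) (w i)) * (hammingDist x w : ℝ)
      = Fintype.card ι * ∑ s, ∑ t, if s ≠ t then p s t else 0 := by
  have hp' : ∑ c : A × A, p c.1 c.2 = 1 := by rw [Fintype.sum_prod_type']; exact hp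
  rw [sum_pi_sum_pi_eq_sum_pi_prod]
  simp only [hammingDist, natCast_card_filter]
  rw [sum_pi_prod_mul_sum (fun c : A × A => p c.1 c.2) (fun c => if c.1 ≠ c.2 then 1 else 0) hp',
    ← Fintype.sum_prod_type']
  simp only [mul_ite, mul_one, mul_zero]

lemma sum_uniform_shift_prod_mul {A G : Type*} [Fintype A] [AddGroup G] [Fintype G]
    (q : A → G → ℝ) (h : (ι → A) → (ι → G) → ℝ) :
    ∑ u : ι → G, ∑ x : ι → A, ∑ v : ι → G,
        (∏ i, 1 / (Fintype.card G : ℝ) * q (x i) (u i + v i)) * h x (u + v)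
      = ∑ x : ι → A, ∑ w : ι → G, (∏ i, q (x i) (w i)) * h x w := by
  have hG : (Fintype.card G : ℝ) ≠ 0 := Nat.cast_ne_zero.2 Fintype.card_ne_zero
  have shift : ∀ x (v : ι → G), ∑ u : ι → G,
      (∏ i, 1 / (Fintype.card G : ℝ) * q (x i) (u i + v i)) * h x (u + v)
        = (1 / Fintype.card G) ^ Fintype.card ι * ∑ w : ι → G, (∏ i, q (x i) (w i)) * h x w := by
    intro x v
    rw [mul_sum]
    refine Fintype.sum_equiv (Equiv.addRight v) _ _ fun u => ?_
    simp only [prod_mul_distrib, prod_const, card_univ, Equiv.coe_addRight, Pi.add_apply, mul_assoc]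
  rw [sum_comm]
  refine sum_congr rfl fun x _ => ?_
  rw [sum_comm, sum_congr rfl fun v _ => shift x v, sum_const, card_univ, nsmul_eq_mul,
    Fintype.card_fun, ← mul_assoc, Nat.cast_pow, ← mul_pow, mul_one_div_cancel hG, one_pow, one_mul]

lemma sum_pi_sum_pi_prod_mul_hammingDist_comp_le {A : Type*} [Fintype A] [DecidableEq A]
    {p : A → A → ℝ} {m : A → ℝ} (hp : ∀ s t, 0 ≤ p s t) (hm : ∀ t, ∑ s, p s t = m t)
    (g : (ι → A) → (ι → A)) :
    ∑ x : ι → A, ∑ w : ι → A, (∏ i, p (x i) (w i)) * (hammingDist x (g w) : ℝ)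
      ≤ ∑ x : ι → A, ∑ w : ι → A, (∏ i, p (x i) (w i)) * (hammingDist x w : ℝ)
        + Fintype.card ι * ∑ w : ι → A, if g w ≠ w then ∏ i, m (w i) else 0 := by
  have triangle : ∀ x w : ι → A,
      (hammingDist x (g w) : ℝ) ≤ hammingDist x w + Fintype.card ι * if g w ≠ w then 1 else 0 := by
    intro x w
    have h := hammingDist_triangle x w (g w)
    split_ifs with hw
    · have := (hammingDist_le_card_fintype : hammingDist w (g w) ≤ _)
      rw [mul_one]; exact_mod_cast h.trans (by omega)
    · rw [not_not.1 hw, mul_zero, add_zero]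
  have marginal : ∀ w : ι → A, ∑ x : ι → A, ∏ i, p (x i) (w i) = ∏ i, m (w i) := fun w => by
    rw [← Fintype.prod_sum fun i s => p s (w i)]
    exact prod_congr rfl fun i _ => hm (w i)
  calc ∑ x : ι → A, ∑ w : ι → A, (∏ i, p (x i) (w i)) * (hammingDist x (g w) : ℝ)
      ≤ ∑ x : ι → A, ∑ w : ι → A, (∏ i, p (x i) (w i)) *
          (hammingDist x w + Fintype.card ι * if g w ≠ w then 1 else 0) :=
        sum_le_sum fun x _ => sum_le_sum fun w _ =>
          mul_le_mul_of_nonneg_left (triangle x w) (prod_nonneg fun i _ => hp _ _)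
    _ = _ := by
        simp only [mul_add, sum_add_distrib, add_right_inj]
        rw [sum_comm, mul_sum]
        refine sum_congr rfl fun w _ => ?_
        rw [← marginal w]
        split_ifs <;> simp only [mul_one, mul_zero, zero_mul, sum_const_zero, mul_sum, mul_comm]

end ProductMeasure

lemma sum_zmod_two {M : Type*} [AddCommMonoid M] (f : ZMod 2 → M) : ∑ x, f x = f 0 + f 1 :=
  Fin.sum_univ_two f

lemma bern_nonneg {r : ℝ} (h₀ : 0 ≤ r) (h₁ : r ≤ 1) (x : ZMod 2) : 0 ≤ bern r x :=
  mul_nonneg (pow_nonneg h₀ _) (pow_nonneg (sub_nonneg.2 h₁) _)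

lemma targetP_nonneg {α D : ℝ} (hα₀ : 0 ≤ α) (hα₁ : α ≤ 1) (hD₀ : 0 ≤ D) (hD₁ : D ≤ 1)
    (x xh : ZMod 2) : 0 ≤ targetP α D x xh :=
  mul_nonneg (bern_nonneg hα₀ hα₁ xh) (bern_nonneg hD₀ hD₁ _)

@[simp] lemma bern_zero (r : ℝ) : bern r 0 = 1 - r := by simp [bern]

@[simp] lemma bern_one (r : ℝ) : bern r 1 = r := by simp [bern, ZMod.val_one]

lemma sum_bern (r : ℝ) : ∑ x, bern r x = 1 := by
  simp [sum_zmod_two]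

lemma sum_targetP_fst (α D : ℝ) (xh : ZMod 2) : ∑ x, targetP α D x xh = bern α xh := by
  simp only [targetP, ← mul_sum]
  rw [Fintype.sum_equiv (Equiv.addRight xh) (fun x => bern D (x + xh)) (bern D) fun _ => rfl,
    sum_bern, mul_one]

lemma sum_sum_targetP (α D : ℝ) : ∑ x, ∑ xh, targetP α D x xh = 1 := by
  rw [sum_comm]; simp only [sum_targetP_fst, sum_bern]

lemma sum_sum_ite_ne_targetP (α D : ℝ) :
    ∑ x, ∑ xh, (if x ≠ xh then targetP α D x xh else 0) = D := by
  simp only [ne_eq, targetP, ite_not, sum_zmod_two, bern_zero, bern_one, add_zero, zero_add,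
    ↓reduceIte, zero_ne_one, one_ne_zero]
  ring

lemma sum_sum_sum_ite_prod_bern_mul_uniform {ι : Type*} [Fintype ι] [DecidableEq ι] (θ : ℝ)
    (φ : (ι → ZMod 2) → (ι → ZMod 2) → (ι → ZMod 2)) :
    ∑ u, ∑ x, ∑ v,
      (if φ x v = u then (∏ i, bern θ (x i)) * ((1 : ℝ) / 2 ^ Fintype.card ι) else 0) = 1 := by
  have hx : ∑ x : ι → ZMod 2, ∏ i, bern θ (x i) = 1 := by
    rw [sum_pi_prod_eq_pow, sum_bern, one_pow]
  have hv : ∑ _v : ι → ZMod 2, (1 : ℝ) / 2 ^ Fintype.card ι = 1 := by simp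
  calc _ = ∑ x : ι → ZMod 2, ∑ _v : ι → ZMod 2,
        (∏ i, bern θ (x i)) * ((1 : ℝ) / 2 ^ Fintype.card ι) := by
        simpa only [mul_one] using sum_sum_sum_ite_eq_mul φ
          (fun x _ => (∏ i, bern θ (x i)) * ((1 : ℝ) / 2 ^ Fintype.card ι)) fun _ _ _ => 1
    _ = 1 := by rw [← sum_mul_sum, hx, hv, one_mul]

theorem expected_distortion_le {ι : Type*} [Fintype ι] [DecidableEq ι] [Nonempty ι]
    {θ D α δ ε : ℝ} (hα₀ : 0 ≤ α) (hα₁ : α ≤ 1) (hD₀ : 0 ≤ D) (hD₁ : D ≤ 1)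
    (φ : (ι → ZMod 2) → (ι → ZMod 2) → (ι → ZMod 2)) (g : (ι → ZMod 2) → (ι → ZMod 2))
    (hδ : (1 / 2) * ∑ u : ι → ZMod 2, ∑ x : ι → ZMod 2, ∑ v : ι → ZMod 2,
        |(if φ x v = u then (∏ i, bern θ (x i)) * ((1 : ℝ) / 2 ^ Fintype.card ι) else 0)
          - ∏ i, ((1 : ℝ) / 2) * targetP α D (x i) (u i + v i)| ≤ δ)
    (hε : ∑ u : ι → ZMod 2, (if g u ≠ u then ∏ i, bern α (u i) else 0) ≤ ε) :
    (1 / (Fintype.card ι : ℝ)) * ∑ x : ι → ZMod 2, ∑ v : ι → ZMod 2,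
      (∏ i, bern θ (x i)) * ((1 : ℝ) / 2 ^ Fintype.card ι) *
        (hammingDist x (g (φ x v + v)) : ℝ) ≤ D + δ + ε := by
  set n := Fintype.card ι
  have hn : (0 : ℝ) < n := Nat.cast_pos.2 Fintype.card_pos
  set P : (ι → ZMod 2) → (ι → ZMod 2) → ℝ := fun x _ => (∏ i, bern θ (x i)) * ((1 : ℝ) / 2 ^ n)
  set R : (ι → ZMod 2) → (ι → ZMod 2) → (ι → ZMod 2) → ℝ :=
    fun u x v => ∏ i, ((1 : ℝ) / 2) * targetP α D (x i) (u i + v i)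
  have shift : ∀ h : (ι → ZMod 2) → (ι → ZMod 2) → ℝ,
      ∑ u, ∑ x, ∑ v, R u x v * h x (u + v)
        = ∑ x : ι → ZMod 2, ∑ w : ι → ZMod 2, (∏ i, targetP α D (x i) (w i)) * h x w := by
    intro h
    have := sum_uniform_shift_prod_mul (G := ZMod 2) (targetP α D) h
    rwa [ZMod.card, Nat.cast_ofNat] at this
  have massP : ∑ u, ∑ x, ∑ v, (if φ x v = u then P x v else 0) = 1 :=
    sum_sum_sum_ite_prod_bern_mul_uniform θ φ
  have massR : ∑ u, ∑ x, ∑ v, R u x v = 1 := by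
    simpa [sum_pi_sum_pi_prod_eq_pow, sum_sum_targetP] using shift fun _ _ => 1
  have tv := sum_mul_le_sum_mul_add_mul_tv (M := n)
    (q := fun p : (ι → ZMod 2) × (ι → ZMod 2) × (ι → ZMod 2) =>
      if φ p.2.1 p.2.2 = p.1 then P p.2.1 p.2.2 else 0)
    (r := fun p => R p.1 p.2.1 p.2.2)
    (f := fun p => (hammingDist p.2.1 (g (p.1 + p.2.2)) : ℝ))
    (fun _ => ⟨Nat.cast_nonneg _, Nat.cast_le.2 hammingDist_le_card_fintype⟩)
    (by simp only [Fintype.sum_prod_type, massP, massR])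
  simp only [Fintype.sum_prod_type] at tv
  have decoder := sum_pi_sum_pi_prod_mul_hammingDist_comp_le
    (targetP_nonneg hα₀ hα₁ hD₀ hD₁) (sum_targetP_fst α D) g
  rw [sum_pi_sum_pi_prod_mul_hammingDist _ (sum_sum_targetP α D), sum_sum_ite_ne_targetP] at decoder
  calc (1 / (n : ℝ)) * ∑ x, ∑ v, P x v * (hammingDist x (g (φ x v + v)) : ℝ)
      = (1 / n) * ∑ u, ∑ x, ∑ v,
          (if φ x v = u then P x v else 0) * (hammingDist x (g (u + v)) : ℝ) := by
        rw [sum_sum_sum_ite_eq_mul]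
    _ ≤ (1 / n) * (∑ x : ι → ZMod 2, ∑ w : ι → ZMod 2,
          (∏ i, targetP α D (x i) (w i)) * (hammingDist x (g w) : ℝ) + n * δ) := by
        rw [← shift fun x w => (hammingDist x (g w) : ℝ)]
        gcongr
        exact tv.trans (by gcongr)
    _ ≤ (1 / n) * (n * D + n * ε + n * δ) := by
        gcongr
        exact decoder.trans (by gcongr)
    _ = D + δ + ε := by field_simp; ring

theorem stmt10_general (a b c : ℕ) (hb : 0 < b)
    (θ D α δ ε : ℝ) (hθ : θ ∈ Set.Ioo (0 : ℝ) (1 / 2)) (hD : D ∈ Set.Ioo 0 θ)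
    (hα : α = (θ - D) / (1 - 2 * D))
    (H₁ : Matrix (Fin b) (Fin a ⊕ Fin b ⊕ Fin c) (ZMod 2))
    (Q : Matrix (Fin c) (Fin a ⊕ Fin b ⊕ Fin c) (ZMod 2))
    (φ₁ : ((Fin a ⊕ Fin b ⊕ Fin c) → ZMod 2) →
          ((Fin a ⊕ Fin b ⊕ Fin c) → ZMod 2) →
          ((Fin a ⊕ Fin b ⊕ Fin c) → ZMod 2))
    (hφ₁C : ∀ x v, H₁.mulVec (φ₁ x v) = 0)
    (hδ : (1 / 2) * ∑ u : (Fin a ⊕ Fin b ⊕ Fin c) → ZMod 2,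
        ∑ x : (Fin a ⊕ Fin b ⊕ Fin c) → ZMod 2,
        ∑ v : (Fin a ⊕ Fin b ⊕ Fin c) → ZMod 2,
        |(if φ₁ x v = u then
            (∏ i, bern θ (x i)) * ((1 : ℝ) / 2 ^ (a + b + c))
          else 0)
          - ∏ i, ((1 : ℝ) / 2) * targetP α D (x i) (u i + v i)| ≤ δ)
    (φ₂ : ((Fin a ⊕ Fin b ⊕ Fin c) → ZMod 2) →
          ((Fin a ⊕ Fin b ⊕ Fin c) → ZMod 2))
    (hε : ∑ u : (Fin a ⊕ Fin b ⊕ Fin c) → ZMod 2,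
        (if φ₂ (pad₂ (H₁.mulVec u) (Q.mulVec u)) ≠ u then
          ∏ i, bern α (u i)
        else 0) ≤ ε) :
    (1 / ((a + b + c : ℕ) : ℝ)) * ∑ x : (Fin a ⊕ Fin b ⊕ Fin c) → ZMod 2,
      ∑ v : (Fin a ⊕ Fin b ⊕ Fin c) → ZMod 2,
      (∏ i, bern θ (x i)) * ((1 : ℝ) / 2 ^ (a + b + c)) *
        (hammingDist x (φ₂ (pad₂ (H₁.mulVec v) (Q.mulVec (φ₁ x v + v)))) : ℝ)
      ≤ D + δ + ε := by
  obtain ⟨hθ₀, hθ₁⟩ := hθ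
  obtain ⟨hD₀, hDθ⟩ := hD
  have hα₀ : 0 ≤ α := hα ▸ div_nonneg (by linarith) (by linarith)
  have hα₁ : α ≤ 1 := hα ▸ (div_le_one (by linarith)).2 (by linarith)
  have : Nonempty (Fin a ⊕ Fin b ⊕ Fin c) := ⟨Sum.inr (Sum.inl ⟨0, hb⟩)⟩
  have hcard : Fintype.card (Fin a ⊕ Fin b ⊕ Fin c) = a + b + c := by simp [add_assoc]
  have syndrome : ∀ x v, H₁.mulVec v = H₁.mulVec (φ₁ x v + v) := fun x v => by
    rw [Matrix.mulVec_add, hφ₁C, zero_add]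
  rw [← hcard] at hδ ⊢
  convert expected_distortion_le hα₀ hα₁ hD₀.le (by linarith) φ₁
    (fun w => φ₂ (pad₂ (H₁.mulVec w) (Q.mulVec w))) hδ hε using 9
  exact syndrome _ _

/-- **Distortion of the lossy source coding scheme.**  Under the construction
of Lemma 4 (`Xⁿ` i.i.d. `Bern(θ)`, `Vⁿ` i.i.d. uniform independent of `Xⁿ`,
`Uⁿ = φ₁(Xⁿ,Vⁿ) ⊕ Vⁿ`, `X̂ⁿ = φ₂(pad₂(H₁Vⁿ, QUⁿ))`), the normalized
expected Hamming distortion satisfies `(1/n)·E[d_H(Xⁿ,X̂ⁿ)] ≤ D + δ + ε`. -/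
theorem stmt10 (a b c : ℕ) (hb : 0 < b) (hc : 0 < c)
    (θ D α δ ε : ℝ) (hθ : θ ∈ Set.Ioo (0 : ℝ) (1 / 2)) (hD : D ∈ Set.Ioo 0 θ)
    (hα : α = (θ - D) / (1 - 2 * D))
    (H₁ : Matrix (Fin b) (Fin a ⊕ Fin b ⊕ Fin c) (ZMod 2))
    (Q : Matrix (Fin c) (Fin a ⊕ Fin b ⊕ Fin c) (ZMod 2))
    (φ₁ : ((Fin a ⊕ Fin b ⊕ Fin c) → ZMod 2) →
          ((Fin a ⊕ Fin b ⊕ Fin c) → ZMod 2) →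
          ((Fin a ⊕ Fin b ⊕ Fin c) → ZMod 2))
    (hφ₁C : ∀ x v, H₁.mulVec (φ₁ x v) = 0)
    (hδ : (1 / 2) * ∑ u : (Fin a ⊕ Fin b ⊕ Fin c) → ZMod 2,
        ∑ x : (Fin a ⊕ Fin b ⊕ Fin c) → ZMod 2,
        ∑ v : (Fin a ⊕ Fin b ⊕ Fin c) → ZMod 2,
        |(if φ₁ x v = u then
            (∏ i, bern θ (x i)) * ((1 : ℝ) / 2 ^ (a + b + c))
          else 0)
          - ∏ i, ((1 : ℝ) / 2) * targetP α D (x i) (u i + v i)| ≤ δ)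
    (φ₂ : ((Fin a ⊕ Fin b ⊕ Fin c) → ZMod 2) →
          ((Fin a ⊕ Fin b ⊕ Fin c) → ZMod 2))
    (hε : ∑ u : (Fin a ⊕ Fin b ⊕ Fin c) → ZMod 2,
        (if φ₂ (pad₂ (H₁.mulVec u) (Q.mulVec u)) ≠ u then
          ∏ i, bern α (u i)
        else 0) ≤ ε) :
    (1 / ((a + b + c : ℕ) : ℝ)) * ∑ x : (Fin a ⊕ Fin b ⊕ Fin c) → ZMod 2,
      ∑ v : (Fin a ⊕ Fin b ⊕ Fin c) → ZMod 2,
      (∏ i, bern θ (x i)) * ((1 : ℝ) / 2 ^ (a + b + c)) *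
        (hammingDist x (φ₂ (pad₂ (H₁.mulVec v) (Q.mulVec (φ₁ x v + v)))) : ℝ)
      ≤ D + δ + ε :=
  stmt10_general a b c hb θ D α δ ε hθ hD hα H₁ Q φ₁ hφ₁C hδ φ₂ hε
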